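/- Let η > 0, s ≥ 1, ω₀ = 1 + η/s², ω₁ = T_s(ω₀)/T_s'(ω₀), and define A_s(z) = T_s(ω₀ + ω₁ z)/T_s(ω₀). Then for every complex z with |z| ≤ 1, one has |A_s(z)| ≤ e^{η + e^η}. -/

import Mathlib

/-!
Write `w = cos θ`. Then `T_s(w) = cos (sθ)`, so
`|T_s(w)| ≤ cosh (s Im θ) ≤ exp (s² (Im θ)² / 2) ≤ exp (s² (cosh (Im θ) - 1)) ≤ exp (s² |w - 1|)`.
On the real axis `T_s(ω₀) ≥ 1` and `T_s'(ω₀) ≥ s²`, hence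
`s² ω₁ ≤ T_s(ω₀) ≤ exp (s² (ω₀ - 1)) = e^η`. On the unit disc `|ω₀ + ω₁ z - 1| ≤ η / s² + ω₁`,
so `|A_s(z)| ≤ |T_s(ω₀ + ω₁ z)| ≤ exp (η + s² ω₁) ≤ exp (η + e^η)`.
-/

open Polynomial Polynomial.Chebyshev

namespace Real

lemma one_add_sq_div_two_le_cosh (x : ℝ) : 1 + x ^ 2 / 2 ≤ cosh x := by
  have h := sum_le_hasSum (Finset.range 2)
    (fun n _ => div_nonneg (by rw [pow_mul]; positivity) (by positivity)) (hasSum_cosh x)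
  simpa [Finset.sum_range_succ] using h

lemma cosh_mul_le_exp_sq_mul (a x : ℝ) : cosh (a * x) ≤ exp (a ^ 2 * (cosh x - 1)) :=
  calc cosh (a * x) ≤ exp ((a * x) ^ 2 / 2) := cosh_le_exp_half_sq _
    _ = exp (a ^ 2 * (x ^ 2 / 2)) := by ring_nf
    _ ≤ exp (a ^ 2 * (cosh x - 1)) := by
      gcongr
      linarith [one_add_sq_div_two_le_cosh x]

lemma natCast_mul_sinh_le_sinh_natCast_mul {t : ℝ} (ht : 0 ≤ t) (n : ℕ) :
    n * sinh t ≤ sinh (n * t) := by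
  induction n with
  | zero => simp
  | succ n ih =>
    have hsinh : 0 ≤ sinh t := sinh_nonneg_iff.mpr ht
    have hsinh_n : 0 ≤ sinh (n * t) := sinh_nonneg_iff.mpr (by positivity)
    rw [Nat.cast_succ, add_one_mul, add_one_mul, sinh_add]
    nlinarith [one_le_cosh t, one_le_cosh (n * t)]

end Real

namespace Complex

lemma norm_cos_le_cosh_im (θ : ℂ) : ‖cos θ‖ ≤ Real.cosh θ.im := by
  rw [cos, Real.cosh_eq, norm_div, Complex.norm_two, add_comm (Real.exp _)]
  gcongr
  refine (norm_add_le _ _).trans_eq ?_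
  simp [Complex.norm_exp]

lemma norm_cos_sub_one (θ : ℂ) : ‖cos θ - 1‖ = Real.cosh θ.im - Real.cos θ.re := by
  have hsq : ‖cos θ - 1‖ ^ 2 = (Real.cosh θ.im - Real.cos θ.re) ^ 2 := by
    rw [cos_eq, Complex.sq_norm, Complex.normSq_apply]
    simp only [← ofReal_cos, ← ofReal_cosh, ← ofReal_sin, ← ofReal_sinh, sub_re, mul_re, ofReal_re,
      ofReal_im, mul_zero, sub_zero, I_re, mul_im, zero_mul, add_zero, I_im, mul_one, sub_self,
      one_re, sub_im, zero_sub, one_im, mul_neg, neg_mul, neg_neg]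
    nlinarith [Real.sin_sq_add_cos_sq θ.re, Real.cosh_sq' θ.im]
  have hnonneg : 0 ≤ Real.cosh θ.im - Real.cos θ.re := by
    linarith [Real.one_le_cosh θ.im, Real.cos_le_one θ.re]
  exact (pow_left_inj₀ (norm_nonneg _) hnonneg two_ne_zero).mp hsq

end Complex

namespace Polynomial.Chebyshev

lemma norm_eval_T_complex_le_exp (n : ℤ) (w : ℂ) :
    ‖(T ℂ n).eval w‖ ≤ Real.exp (n ^ 2 * ‖w - 1‖) := by
  obtain ⟨θ, rfl⟩ := Complex.cos_surjective w
  have him : ((n : ℂ) * θ).im = n * θ.im := by simp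
  calc ‖(T ℂ n).eval (Complex.cos θ)‖ = ‖Complex.cos (n * θ)‖ := by rw [T_complex_cos]
    _ ≤ Real.cosh (n * θ.im) := him ▸ Complex.norm_cos_le_cosh_im _
    _ ≤ Real.exp (n ^ 2 * (Real.cosh θ.im - 1)) := Real.cosh_mul_le_exp_sq_mul _ _
    _ ≤ Real.exp (n ^ 2 * ‖Complex.cos θ - 1‖) := by
      rw [Complex.norm_cos_sub_one]
      gcongr
      linarith [Real.cos_le_one θ.re]

lemma eval_T_real_le_exp (n : ℤ) {x : ℝ} (hx : 1 ≤ x) :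
    (T ℝ n).eval x ≤ Real.exp (n ^ 2 * (x - 1)) := by
  rw [← Real.cosh_arcosh hx, T_real_cosh]
  exact Real.cosh_mul_le_exp_sq_mul _ _

lemma sq_le_eval_derivative_T_real (n : ℕ) {x : ℝ} (hx : 1 < x) :
    (n : ℝ) ^ 2 ≤ (derivative (T ℝ n)).eval x := by
  obtain ⟨t, ht, rfl⟩ : ∃ t > 0, Real.cosh t = x :=
    ⟨_, Real.arcosh_pos hx, Real.cosh_arcosh hx.le⟩
  have hU : (U ℝ ((n : ℤ) - 1)).eval (Real.cosh t) * Real.sinh t = Real.sinh (n * t) := by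
    rw [U_real_cosh]
    push_cast
    ring_nf
  have hUn : (n : ℝ) ≤ (U ℝ ((n : ℤ) - 1)).eval (Real.cosh t) := by
    rw [← mul_le_mul_iff_left₀ (Real.sinh_pos_iff.mpr ht), hU]
    exact Real.natCast_mul_sinh_le_sinh_natCast_mul ht.le n
  rw [T_derivative_eq_U, eval_mul, sq]
  push_cast
  rw [eval_natCast]
  gcongr

lemma sq_mul_eval_T_div_eval_derivative_T_le_exp (n : ℕ) {x : ℝ} (hx : 1 < x) :
    (n : ℝ) ^ 2 * ((T ℝ n).eval x / (derivative (T ℝ n)).eval x) ≤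
      Real.exp (n ^ 2 * (x - 1)) := by
  have hT : 1 ≤ (T ℝ n).eval x := one_le_eval_T_real _ hx.le
  have hT' : (n : ℝ) ^ 2 ≤ (derivative (T ℝ n)).eval x := sq_le_eval_derivative_T_real n hx
  calc (n : ℝ) ^ 2 * ((T ℝ n).eval x / (derivative (T ℝ n)).eval x) ≤ (T ℝ n).eval x := by
        rw [mul_div_assoc']
        refine div_le_of_le_mul₀ ((sq_nonneg _).trans hT') (by linarith) ?_
        rw [mul_comm]
        exact mul_le_mul_of_nonneg_left hT' (by linarith)
    _ ≤ Real.exp (n ^ 2 * (x - 1)) := mod_cast eval_T_real_le_exp n hx.le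

end Polynomial.Chebyshev

/-- Let `η > 0`, `s ≥ 1`, `ω₀ = 1 + η/s²`, `ω₁ = T_s(ω₀)/T_s'(ω₀)`, and
`A_s(z) = T_s(ω₀ + ω₁ z)/T_s(ω₀)`. Then for every complex `z` with `|z| ≤ 1`,
`|A_s(z)| ≤ exp (η + exp η)`. -/
theorem stability_function_bound_on_disc (η : ℝ) (hη : 0 < η) (s : ℕ) (hs : 1 ≤ s)
    (ω₀ ω₁ : ℝ) (hω₀ : ω₀ = 1 + η / (s : ℝ) ^ 2)
    (hω₁ : ω₁ = (Chebyshev.T ℝ (s : ℤ)).eval ω₀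
      / ((Polynomial.derivative (Chebyshev.T ℝ (s : ℤ))).eval ω₀))
    (A : ℂ → ℂ)
    (hA : ∀ z : ℂ, A z = (Chebyshev.T ℂ (s : ℤ)).eval ((ω₀ : ℂ) + (ω₁ : ℂ) * z)
      / (Chebyshev.T ℂ (s : ℤ)).eval (ω₀ : ℂ)) :
    ∀ z : ℂ, ‖z‖ ≤ 1 → ‖A z‖ ≤ Real.exp (η + Real.exp η) := by
  intro z hz
  have hs₀ : (0 : ℝ) < (s : ℝ) ^ 2 := by positivity
  have hω₀_gt : 1 < ω₀ := by rw [hω₀]; linarith [div_pos hη hs₀]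
  have hT : 1 ≤ (T ℝ s).eval ω₀ := one_le_eval_T_real _ hω₀_gt.le
  have hω₁_nonneg : 0 ≤ ω₁ :=
    hω₁ ▸ div_nonneg (by linarith) ((sq_nonneg _).trans (sq_le_eval_derivative_T_real s hω₀_gt))
  have hs_sq_ω₁ : (s : ℝ) ^ 2 * ω₁ ≤ Real.exp η := by
    rw [hω₁]
    convert sq_mul_eval_T_div_eval_derivative_T_le_exp s hω₀_gt using 2
    rw [hω₀, add_sub_cancel_left, mul_div_cancel₀ _ hs₀.ne']
  have hw : ‖(ω₀ : ℂ) + ω₁ * z - 1‖ ≤ η / s ^ 2 + ω₁ :=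
    calc ‖(ω₀ : ℂ) + ω₁ * z - 1‖ = ‖((ω₀ - 1 : ℝ) : ℂ) + ω₁ * z‖ := by push_cast; ring_nf
      _ ≤ (ω₀ - 1) + ω₁ * 1 := by
        refine (norm_add_le _ _).trans ?_
        rw [norm_mul, Complex.norm_real, Complex.norm_real, Real.norm_of_nonneg (by linarith),
          Real.norm_of_nonneg hω₁_nonneg]
        gcongr
      _ = η / s ^ 2 + ω₁ := by rw [hω₀]; ring
  rw [hA, norm_div, ← complex_ofReal_eval_T, Complex.norm_real, Real.norm_of_nonneg (by linarith)]
  calc _ ≤ ‖(T ℂ s).eval ((ω₀ : ℂ) + ω₁ * z)‖ := div_le_self (norm_nonneg _) hT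
    _ ≤ Real.exp (s ^ 2 * ‖(ω₀ : ℂ) + ω₁ * z - 1‖) := mod_cast norm_eval_T_complex_le_exp s _
    _ ≤ Real.exp (s ^ 2 * (η / s ^ 2 + ω₁)) := by gcongr
    _ = Real.exp (η + s ^ 2 * ω₁) := by field_simp
    _ ≤ Real.exp (η + Real.exp η) := by gcongr
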